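/- arXiv:1511.03927 — 5 statements merged into one kernel-verified Lean document; each statement's English description precedes it below -/
import Mathlib

section
/- Let d > 0, 0 ≤ γ ≤ 1, and let A be a real symmetric m×m matrix. Let D be a diagonal matrix with positive diagonal entries d_1,…,d_m satisfying |d_i − d| ≤ γ·d for every i, and set N = D^{−1/2} A D^{−1/2}. If ‖N‖ ≤ 1, then ‖A − d·N‖ ≤ 3·γ·d. -/
set_option maxHeartbeats 1000000
set_option synthInstance.maxHeartbeats 400000

noncomputable def specNorm {m : ℕ} (M : Matrix (Fin m) (Fin m) ℝ) : ℝ :=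
  ‖Matrix.toEuclideanCLM (𝕜 := ℝ) M‖

lemma specNorm_nonneg {m : ℕ} (X : Matrix (Fin m) (Fin m) ℝ) : 0 ≤ specNorm X :=
  norm_nonneg _

lemma specNorm_mul_le {m : ℕ} (X Y : Matrix (Fin m) (Fin m) ℝ) :
    specNorm (X * Y) ≤ specNorm X * specNorm Y := by
  unfold specNorm; rw [map_mul]; exact norm_mul_le _ _

lemma specNorm_add_le {m : ℕ} (X Y : Matrix (Fin m) (Fin m) ℝ) :
    specNorm (X + Y) ≤ specNorm X + specNorm Y := by
  unfold specNorm; rw [map_add]; exact norm_add_le _ _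

lemma specNorm_smul {m : ℕ} (c : ℝ) (X : Matrix (Fin m) (Fin m) ℝ) :
    specNorm (c • X) = |c| * specNorm X := by
  unfold specNorm; rw [map_smul]
  exact (norm_smul c (Matrix.toEuclideanCLM (𝕜 := ℝ) X)).trans (by rw [Real.norm_eq_abs])

lemma specNorm_diagonal_le {m : ℕ} (v : Fin m → ℝ) (c : ℝ) (hc : 0 ≤ c)
    (h : ∀ i, |v i| ≤ c) : specNorm (Matrix.diagonal v) ≤ c := by
  unfold specNorm
  refine ContinuousLinearMap.opNorm_le_bound _ hc (fun x => ?_)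
  have happ : ∀ i, (Matrix.toEuclideanCLM (𝕜 := ℝ) (Matrix.diagonal v) x) i = v i * x i := by
    intro i
    have := congrFun (Matrix.ofLp_toEuclideanCLM (Matrix.diagonal v) x) i
    simpa [Matrix.mulVec_diagonal] using this
  rw [EuclideanSpace.norm_eq, EuclideanSpace.norm_eq]
  rw [← Real.sqrt_sq hc, ← Real.sqrt_mul (by positivity)]
  apply Real.sqrt_le_sqrt
  rw [Finset.mul_sum]
  apply Finset.sum_le_sum
  intro i _
  rw [happ]
  have hb : |v i * x i| ≤ c * |x i| := by
    rw [abs_mul]; exact mul_le_mul_of_nonneg_right (h i) (abs_nonneg _)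
  calc ‖v i * x i‖ ^ 2 = |v i * x i| ^ 2 := by rw [Real.norm_eq_abs]
    _ ≤ (c * |x i|) ^ 2 := by apply pow_le_pow_left₀ (abs_nonneg _) hb
    _ = c ^ 2 * ‖x i‖ ^ 2 := by rw [mul_pow, Real.norm_eq_abs]

/-- Let `A` be real symmetric, `D` diagonal with positive entries `dᵢ`
satisfying `|dᵢ - d| ≤ γ·d`, and `N = D^{-1/2} A D^{-1/2}`.  If `‖N‖ ≤ 1`, then
`‖A - d·N‖ ≤ 3·γ·d`. -/
theorem stmt3 (m : ℕ) (d γ : ℝ) (hd : 0 < d) (hγ0 : 0 ≤ γ) (hγ1 : γ ≤ 1)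
    (A : Matrix (Fin m) (Fin m) ℝ) (hA : A.IsSymm)
    (dv : Fin m → ℝ) (hdv : ∀ i, 0 < dv i) (hclose : ∀ i, |dv i - d| ≤ γ * d)
    (N : Matrix (Fin m) (Fin m) ℝ)
    (hN : N = Matrix.diagonal (fun i => (Real.sqrt (dv i))⁻¹) * A *
              Matrix.diagonal (fun i => (Real.sqrt (dv i))⁻¹))
    (hNnorm : specNorm N ≤ 1) :
    specNorm (A - d • N) ≤ 3 * γ * d := by
  set c := Real.sqrt d with hc
  have hcpos : 0 < c := Real.sqrt_pos.2 hd
  have hc2 : c * c = d := Real.mul_self_sqrt hd.le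
  set S : Matrix (Fin m) (Fin m) ℝ := Matrix.diagonal (fun i => Real.sqrt (dv i)) with hS
  set Si : Matrix (Fin m) (Fin m) ℝ := Matrix.diagonal (fun i => (Real.sqrt (dv i))⁻¹) with hSi
  have hspos : ∀ i, 0 < Real.sqrt (dv i) := fun i => Real.sqrt_pos.2 (hdv i)
  have hSSi : S * Si = 1 := by
    rw [hS, hSi, Matrix.diagonal_mul_diagonal, ← Matrix.diagonal_one]
    exact congrArg Matrix.diagonal (funext fun i => mul_inv_cancel₀ (hspos i).ne')
  have hSiS : Si * S = 1 := by
    rw [hS, hSi, Matrix.diagonal_mul_diagonal, ← Matrix.diagonal_one]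
    exact congrArg Matrix.diagonal (funext fun i => inv_mul_cancel₀ (hspos i).ne')
  have hAeq : A = S * N * S := by
    rw [hN, show S * (Si * A * Si) * S = (S * Si) * A * (Si * S) by noncomm_ring,
      hSSi, hSiS, one_mul, mul_one]
  set E : Matrix (Fin m) (Fin m) ℝ := S - c • 1 with hE
  have hdecomp : A - d • N = E * (N * S) + c • (N * E) := by
    rw [hAeq, hE]
    simp only [Matrix.sub_mul, Matrix.mul_sub, smul_sub, Matrix.smul_mul, Matrix.mul_smul,
      smul_smul, hc2, one_mul, mul_one, mul_assoc]
    abel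
  have hEdiag : E = Matrix.diagonal (fun i => Real.sqrt (dv i) - c) := by
    rw [hE, hS]
    ext i j
    by_cases h : i = j <;>
      simp [Matrix.sub_apply, Matrix.smul_apply, Matrix.one_apply, Matrix.diagonal_apply, h]
  have hEnorm : specNorm E ≤ γ * c := by
    rw [hEdiag]
    apply specNorm_diagonal_le _ _ (by positivity)
    intro i
    have hsq : Real.sqrt (dv i) * Real.sqrt (dv i) = dv i := Real.mul_self_sqrt (hdv i).le
    have ha := (hspos i).le
    have hpos : 0 < Real.sqrt (dv i) + c := by positivity
    have h1 : (Real.sqrt (dv i) - c) * (Real.sqrt (dv i) + c) = dv i - d := by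
      linear_combination hsq - hc2
    have h2 : |Real.sqrt (dv i) - c| * (Real.sqrt (dv i) + c) = |dv i - d| := by
      rw [← h1, abs_mul, abs_of_pos hpos]
    have h3 : |Real.sqrt (dv i) - c| * (Real.sqrt (dv i) + c)
        ≤ γ * c * (Real.sqrt (dv i) + c) := by
      rw [h2]
      have := hclose i
      nlinarith [mul_nonneg hγ0 hcpos.le]
    exact le_of_mul_le_mul_right h3 hpos
  have hSnorm : specNorm S ≤ 2 * c := by
    rw [hS]
    apply specNorm_diagonal_le _ _ (by positivity)
    intro i
    have hcl := (abs_le.1 (hclose i)).2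
    have h4 : Real.sqrt (dv i) ≤ Real.sqrt (4 * d) := Real.sqrt_le_sqrt (by nlinarith)
    have h5 : Real.sqrt (4 * d) = 2 * c := by
      rw [show (4 : ℝ) * d = 2 ^ 2 * d by ring, Real.sqrt_mul (by norm_num),
        Real.sqrt_sq (by norm_num)]
    rw [abs_of_nonneg (hspos i).le]
    rw [h5] at h4
    exact h4
  have hNn : 0 ≤ specNorm N := specNorm_nonneg N
  have hEn : 0 ≤ specNorm E := specNorm_nonneg E
  have hSn : 0 ≤ specNorm S := specNorm_nonneg S
  calc specNorm (A - d • N) = specNorm (E * (N * S) + c • (N * E)) := by rw [hdecomp]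
    _ ≤ specNorm (E * (N * S)) + specNorm (c • (N * E)) := specNorm_add_le _ _
    _ ≤ specNorm E * (specNorm N * specNorm S) + |c| * (specNorm N * specNorm E) := by
        gcongr
        · exact le_trans (specNorm_mul_le _ _)
            (mul_le_mul_of_nonneg_left (specNorm_mul_le _ _) hEn)
        · rw [specNorm_smul]
          gcongr
          exact specNorm_mul_le _ _
    _ ≤ 3 * γ * d := by
        rw [abs_of_pos hcpos, ← hc2]
        nlinarith [mul_le_mul hEnorm (mul_le_mul hNnorm hSnorm hSn zero_le_one)
          (by positivity) (by positivity),
          mul_le_mul hNnorm hEnorm hEn zero_le_one]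
end

section
/- Let n be a positive integer, d > 0, b ≥ 0 with a := d − 2b, and 0 ≤ γ ≤ 1. Let A be a real symmetric 2n×2n matrix, let D be a diagonal matrix with positive diagonal entries d_1,…,d_{2n} satisfying |d_i − d| ≤ γ·d for every i, let N = D^{−1/2} A D^{−1/2}, and assume ‖N‖ ≤ 1. Let B = (d/(2n))·𝟙𝟙ᵀ + ((a−b)/(2n))·χχᵀ. If ‖A − B‖ ≤ γ·d, then ‖N − (1/d)·B‖ ≤ 4γ. -/
/-- The partition indicator vector `χ`: `+1` on the first community, `-1` on the second. -/
noncomputable def chi (n : ℕ) (i : Fin (2*n)) : ℝ := if i.val < n then 1 else -1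

/-!
Write `D^{1/2} = √d • 1 + G` with `G` diagonal. From `|dᵢ - d| ≤ γ d` one gets
`|√dᵢ - √d| ≤ γ √d`, i.e. `‖G‖ ≤ γ √d`. Expanding `A = D^{1/2} N D^{1/2}` gives
`A - d N = √d (G N + N G) + G N G`, of norm at most `(2γ + γ²) d ≤ 3γ d` since `‖N‖ ≤ 1`;
together with `‖A - B‖ ≤ γ d` this yields `‖d N - B‖ ≤ 4γ d`.
-/

open scoped Matrix.Norms.L2Operator

lemma specNorm_eq_norm {m : ℕ} (M : Matrix (Fin m) (Fin m) ℝ) : specNorm M = ‖M‖ := rfl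

lemma abs_sqrt_sub_sqrt_le {x d γ : ℝ} (hx : 0 ≤ x) (hd : 0 < d) (h : |x - d| ≤ γ * d) :
    |√x - √d| ≤ γ * √d := by
  have hsd : 0 < √d := Real.sqrt_pos.mpr hd
  have hsum : 0 < √x + √d := add_pos_of_nonneg_of_pos (Real.sqrt_nonneg x) hsd
  refine le_of_mul_le_mul_right ?_ hsd
  rw [mul_assoc, Real.mul_self_sqrt hd.le]
  calc |√x - √d| * √d ≤ |√x - √d| * (√x + √d) := by
        gcongr; exact le_add_of_nonneg_left (Real.sqrt_nonneg x)
    _ = |x - d| := by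
        rw [← abs_of_pos hsum, ← abs_mul]
        congr 1
        nlinarith [Real.sq_sqrt hx, Real.sq_sqrt hd.le]
    _ ≤ γ * d := h

section NormedAlgebra

variable {R : Type*} [NormedRing R] [NormedAlgebra ℝ R]

lemma norm_conj_smul_one_add_sub_le (c : ℝ) (G N : R) :
    ‖(c • 1 + G) * N * (c • 1 + G) - c ^ 2 • N‖ ≤ (2 * |c| * ‖G‖ + ‖G‖ ^ 2) * ‖N‖ := by
  have hexpand : (c • 1 + G) * N * (c • 1 + G) - c ^ 2 • N =
      c • (G * N) + c • (N * G) + G * N * G := by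
    simp only [add_mul, mul_add, smul_mul_assoc, mul_smul_comm, one_mul, mul_one]
    module
  rw [hexpand]
  calc ‖c • (G * N) + c • (N * G) + G * N * G‖
      ≤ |c| * (‖G‖ * ‖N‖) + |c| * (‖N‖ * ‖G‖) + ‖G‖ * ‖N‖ * ‖G‖ := by
        refine (norm_add₃_le).trans ?_
        rw [norm_smul, norm_smul, Real.norm_eq_abs]
        gcongr
        · exact norm_mul_le _ _
        · exact norm_mul_le _ _
        · exact norm_mul₃_le
    _ = (2 * |c| * ‖G‖ + ‖G‖ ^ 2) * ‖N‖ := by ring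

theorem norm_sub_smul_le_of_conj_smul_one_add {c γ : ℝ} {G N B : R} (hc : 0 < c) (hγ0 : 0 ≤ γ)
    (hγ1 : γ ≤ 1) (hG : ‖G‖ ≤ γ * c) (hN : ‖N‖ ≤ 1)
    (hAB : ‖(c • 1 + G) * N * (c • 1 + G) - B‖ ≤ γ * c ^ 2) :
    ‖N - (1 / c ^ 2) • B‖ ≤ 4 * γ := by
  set A := (c • 1 + G) * N * (c • 1 + G)
  have hc2 : 0 < c ^ 2 := by positivity
  have hperturb : ‖A - c ^ 2 • N‖ ≤ 3 * γ * c ^ 2 := calc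
    ‖A - c ^ 2 • N‖ ≤ (2 * |c| * ‖G‖ + ‖G‖ ^ 2) * ‖N‖ := norm_conj_smul_one_add_sub_le c G N
    _ ≤ (2 * c * (γ * c) + (γ * c) ^ 2) * 1 := by
        rw [abs_of_pos hc]; gcongr
    _ ≤ 3 * γ * c ^ 2 := by nlinarith [mul_nonneg hγ0 (sub_nonneg.mpr hγ1)]
  have hscale : N - (1 / c ^ 2) • B = (1 / c ^ 2) • ((A - B) - (A - c ^ 2 • N)) := by
    rw [sub_sub_sub_cancel_left, smul_sub, smul_smul, one_div, inv_mul_cancel₀ hc2.ne', one_smul]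
  calc ‖N - (1 / c ^ 2) • B‖ ≤ (1 / c ^ 2) * (‖A - B‖ + ‖A - c ^ 2 • N‖) := by
        rw [hscale, norm_smul, Real.norm_of_nonneg (by positivity)]
        gcongr
        exact norm_sub_le _ _
    _ ≤ (1 / c ^ 2) * (γ * c ^ 2 + 3 * γ * c ^ 2) := by gcongr
    _ = 4 * γ := by field_simp; ring

end NormedAlgebra

lemma Matrix.diagonal_mul_conj_inv_mul_diagonal {ι K : Type*} [Fintype ι] [DecidableEq ι]
    [DivisionRing K] {v : ι → K} (hv : ∀ i, v i ≠ 0) (A : Matrix ι ι K) :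
    Matrix.diagonal v * (Matrix.diagonal (fun i => (v i)⁻¹) * A * Matrix.diagonal (fun i => (v i)⁻¹))
      * Matrix.diagonal v = A := by
  have hright : Matrix.diagonal v * Matrix.diagonal (fun i => (v i)⁻¹) = 1 := by
    rw [Matrix.diagonal_mul_diagonal, ← Matrix.diagonal_one]
    exact congrArg _ (funext fun i => mul_inv_cancel₀ (hv i))
  have hleft : Matrix.diagonal (fun i => (v i)⁻¹) * Matrix.diagonal v = 1 := by
    rw [Matrix.diagonal_mul_diagonal, ← Matrix.diagonal_one]
    exact congrArg _ (funext fun i => inv_mul_cancel₀ (hv i))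
  simp only [← Matrix.mul_assoc, hright, Matrix.one_mul]
  rw [Matrix.mul_assoc, hleft, Matrix.mul_one]

lemma Matrix.diagonal_eq_smul_one_add_diagonal_sub {ι K : Type*} [Fintype ι] [DecidableEq ι]
    [Ring K] (v : ι → K) (c : K) :
    Matrix.diagonal v = c • (1 : Matrix ι ι K) + Matrix.diagonal (fun i => v i - c) := by
  ext i j
  rcases eq_or_ne i j with rfl | hij <;> simp [*]

theorem stmt4_general (n : ℕ) (d γ : ℝ) (hd : 0 < d)
    (hγ0 : 0 ≤ γ) (hγ1 : γ ≤ 1)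
    (A : Matrix (Fin (2*n)) (Fin (2*n)) ℝ)
    (dv : Fin (2*n) → ℝ) (hdv : ∀ i, 0 < dv i) (hclose : ∀ i, |dv i - d| ≤ γ * d)
    (N : Matrix (Fin (2*n)) (Fin (2*n)) ℝ)
    (hN : N = Matrix.diagonal (fun i => (Real.sqrt (dv i))⁻¹) * A *
              Matrix.diagonal (fun i => (Real.sqrt (dv i))⁻¹))
    (hNnorm : specNorm N ≤ 1)
    (B : Matrix (Fin (2*n)) (Fin (2*n)) ℝ)
    (hAB : specNorm (A - B) ≤ γ * d) :
    specNorm (N - (1 / d) • B) ≤ 4 * γ := by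
  set c := √d
  set G : Matrix (Fin (2*n)) (Fin (2*n)) ℝ := Matrix.diagonal (fun i => √(dv i) - c)
  have hG : ‖G‖ ≤ γ * c := by
    rw [Matrix.l2_opNorm_diagonal]
    exact pi_norm_le_iff_of_nonneg (by positivity) |>.mpr
      fun i => abs_sqrt_sub_sqrt_le (hdv i).le hd (hclose i)
  have hA : A = (c • 1 + G) * N * (c • 1 + G) := by
    rw [← Matrix.diagonal_eq_smul_one_add_diagonal_sub, hN,
      Matrix.diagonal_mul_conj_inv_mul_diagonal fun i => (Real.sqrt_pos.mpr (hdv i)).ne']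
  have hc2 : c ^ 2 = d := Real.sq_sqrt hd.le
  rw [specNorm_eq_norm] at hNnorm hAB ⊢
  rw [hA, ← hc2] at hAB
  have key := norm_sub_smul_le_of_conj_smul_one_add (Real.sqrt_pos.mpr hd) hγ0 hγ1 hG hNnorm hAB
  rwa [hc2] at key

/-- Let `A` be real symmetric `2n×2n`, `D` diagonal with positive entries
`dᵢ` satisfying `|dᵢ - d| ≤ γ·d`, `N = D^{-1/2} A D^{-1/2}` with `‖N‖ ≤ 1`, and, with
`a := d - 2b`, let `B = (d/(2n))·𝟙𝟙ᵀ + ((a-b)/(2n))·χχᵀ`.  If `‖A - B‖ ≤ γ·d`, then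
`‖N - (1/d)·B‖ ≤ 4γ`. -/
theorem stmt4 (n : ℕ) (hn : 0 < n) (d b γ : ℝ) (hd : 0 < d) (hb : 0 ≤ b)
    (hγ0 : 0 ≤ γ) (hγ1 : γ ≤ 1)
    (a : ℝ) (ha : a = d - 2 * b)
    (A : Matrix (Fin (2*n)) (Fin (2*n)) ℝ) (hA : A.IsSymm)
    (dv : Fin (2*n) → ℝ) (hdv : ∀ i, 0 < dv i) (hclose : ∀ i, |dv i - d| ≤ γ * d)
    (N : Matrix (Fin (2*n)) (Fin (2*n)) ℝ)
    (hN : N = Matrix.diagonal (fun i => (Real.sqrt (dv i))⁻¹) * A *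
              Matrix.diagonal (fun i => (Real.sqrt (dv i))⁻¹))
    (hNnorm : specNorm N ≤ 1)
    (B : Matrix (Fin (2*n)) (Fin (2*n)) ℝ)
    (hB : B = (d / (2*n)) • Matrix.vecMulVec (fun _ => (1:ℝ)) (fun _ => (1:ℝ))
        + ((a - b) / (2*n)) • Matrix.vecMulVec (chi n) (chi n))
    (hAB : specNorm (A - B) ≤ γ * d) :
    specNorm (N - (1 / d) • B) ≤ 4 * γ :=
  stmt4_general n d γ hd hγ0 hγ1 A dv hdv hclose N hN hNnorm B hAB
end

section
/- Let n be a positive integer and a, b ≥ 1 with d := a + b ≤ n. Let G be drawn from the stochastic block model G_{2n, a/n, b/n} with degrees d_1,…,d_{2n}. Then the variance of the random variable ∑_{i=1}^{2n} (d − d_i)² is at most 84·d²·n. -/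
open MeasureTheory

/-- The Bernoulli measure on `Bool` with parameter `p`. -/
noncomputable def bern (p : ℝ) : Measure Bool :=
  p.toNNReal • Measure.dirac true + (1 - p).toNNReal • Measure.dirac false

/-- The stochastic block model `G_{2n,p,q}`: a symmetric random graph on `2n` vertices,
encoded by independent Bernoulli edge indicators `ω i j` (only the coordinates with
`i ≤ j` are used by `adjOf`), where the pair `{i,j}` (self-loop pairs included) is an
edge with probability `p` if `i,j` are in the same community (`V₁ = {i | i < n}`,
`V₂ = {i | n ≤ i}`) and with probability `q` otherwise. -/
noncomputable def sbm (n : ℕ) (p q : ℝ) :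
    Measure (Fin (2 * n) → Fin (2 * n) → Bool) :=
  Measure.pi fun i => Measure.pi fun j =>
    bern (if i.val < n ↔ j.val < n then p else q)

/-- The (symmetric, 0/1) adjacency matrix determined by the edge indicators `ω`. -/
noncomputable def adjOf {m : ℕ} (ω : Fin m → Fin m → Bool) : Matrix (Fin m) (Fin m) ℝ :=
  Matrix.of fun i j => if i ≤ j then (if ω i j then 1 else 0) else (if ω j i then 1 else 0)

/-- The degree of vertex `i`. -/
noncomputable def deg {m : ℕ} (ω : Fin m → Fin m → Bool) (i : Fin m) : ℝ :=
  ∑ j, adjOf ω i j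

/-- The expectation matrix `B = 𝔼[A]`: entries `a/n` within communities, `b/n` across. -/
noncomputable def Bmat (n : ℕ) (a b : ℝ) : Matrix (Fin (2*n)) (Fin (2*n)) ℝ :=
  Matrix.of fun i j => if i.val < n ↔ j.val < n then a / n else b / n

/-!
Write `d - d_i = ∑_j Z_{ij}` with `Z_e = p_e - 1[e ∈ G]` the independent centred edge variables,
so that `∑_i (d - d_i)^2 = ∑_{i,j,j'} Z_{ij} Z_{ij'}` and its variance is the sum of the
covariances `cov(Z_{ij₁} Z_{ij₂}, Z_{kj₃} Z_{kj₄})`. By independence such a covariance vanishes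
unless the four edges match up in pairs across the two factors, when it is at most `q²`, or all
coincide, when it is at most `q`; here `q = d/n` bounds every edge probability. Counting the
surviving index tuples bounds the variance by `2q²(m³ + 3m²) + q(2m² + 6m)` on `m = 2n` vertices,
which is at most `84 d² n` once `2 ≤ d ≤ n`.
-/

open ProbabilityTheory Finset

section Bernoulli

variable {p : ℝ}

lemma isProbabilityMeasure_bern (hp : p ∈ Set.Icc 0 1) : IsProbabilityMeasure (bern p) := by
  constructor
  simp only [bern, Measure.add_apply, Measure.smul_apply, measure_univ, ENNReal.smul_def,
    smul_eq_mul, mul_one]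
  rw [← ENNReal.coe_add, ← Real.toNNReal_add hp.1 (by linarith [hp.2])]
  norm_num

lemma integral_bern (hp : p ∈ Set.Icc 0 1) (g : Bool → ℝ) :
    ∫ b, g b ∂bern p = p * g true + (1 - p) * g false := by
  rw [bern, integral_add_measure Integrable.of_finite Integrable.of_finite,
    integral_smul_nnreal_measure, integral_smul_nnreal_measure, integral_dirac, integral_dirac,
    NNReal.smul_def, NNReal.smul_def, Real.coe_toNNReal _ hp.1,
    Real.coe_toNNReal _ (sub_nonneg.2 hp.2), smul_eq_mul, smul_eq_mul]

def centeredBit (p : ℝ) (b : Bool) : ℝ := p - if b then 1 else 0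

lemma integral_centeredBit_pow (hp : p ∈ Set.Icc 0 1) (k : ℕ) :
    ∫ b, centeredBit p b ^ k ∂bern p = p * (p - 1) ^ k + (1 - p) * p ^ k := by
  simp [integral_bern hp, centeredBit]

end Bernoulli

section BernoulliArray

variable {ι κ : Type*} [Fintype ι] [Fintype κ]

lemma integral_finset_prod_pi_pi {α : Type*} [MeasurableSpace α] (ν : ι → κ → Measure α)
    [∀ i j, IsProbabilityMeasure (ν i j)] (s : Finset (ι × κ)) (g : ι × κ → α → ℝ) :
    ∫ ω, ∏ c ∈ s, g c (ω c.1 c.2) ∂(Measure.pi fun i => Measure.pi fun j => ν i j)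
      = ∏ c ∈ s, ∫ x, g c x ∂ν c.1 c.2 := by
  classical
  let h : ι → κ → α → ℝ := fun i j x => if (i, j) ∈ s then g (i, j) x else 1
  have hprod : ∀ F : ι × κ → ℝ, ∏ c ∈ s, F c = ∏ i, ∏ j, if (i, j) ∈ s then F (i, j) else 1 :=
    fun F => by rw [← Fintype.prod_prod_type', prod_ite_mem, univ_inter]
  calc ∫ ω, ∏ c ∈ s, g c (ω c.1 c.2) ∂(Measure.pi fun i => Measure.pi fun j => ν i j)
      = ∫ ω, ∏ i, ∏ j, h i j (ω i j) ∂(Measure.pi fun i => Measure.pi fun j => ν i j) := by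
        simp only [hprod, h]
    _ = ∏ i, ∏ j, ∫ x, h i j x ∂ν i j :=
        (integral_fintype_prod_eq_prod fun i (x : κ → α) => ∏ j, h i j (x j)).trans <|
          prod_congr rfl fun i _ => integral_fintype_prod_eq_prod _
    _ = ∏ c ∈ s, ∫ x, g c x ∂ν c.1 c.2 := by
        rw [hprod]
        refine prod_congr rfl fun i _ => prod_congr rfl fun j _ => ?_
        split_ifs <;> simp [h, *]

noncomputable def bernArray (P : ι → κ → ℝ) : Measure (ι → κ → Bool) :=
  Measure.pi fun i => Measure.pi fun j => bern (P i j)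

def centeredEntry (P : ι → κ → ℝ) (c : ι × κ) (ω : ι → κ → Bool) : ℝ :=
  centeredBit (P c.1 c.2) (ω c.1 c.2)

variable {P : ι → κ → ℝ}

lemma isProbabilityMeasure_bernArray (hP : ∀ i j, P i j ∈ Set.Icc 0 1) :
    IsProbabilityMeasure (bernArray P) :=
  have := fun i j => isProbabilityMeasure_bern (hP i j)
  inferInstanceAs (IsProbabilityMeasure (Measure.pi _))

lemma integral_finset_prod_centeredEntry_pow (hP : ∀ i j, P i j ∈ Set.Icc 0 1)
    (s : Finset (ι × κ)) (k : ι × κ → ℕ) :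
    ∫ ω, ∏ c ∈ s, centeredEntry P c ω ^ k c ∂bernArray P
      = ∏ c ∈ s, (P c.1 c.2 * (P c.1 c.2 - 1) ^ k c + (1 - P c.1 c.2) * P c.1 c.2 ^ k c) := by
  have := fun i j => isProbabilityMeasure_bern (hP i j)
  exact (integral_finset_prod_pi_pi _ s fun c b => centeredBit (P c.1 c.2) b ^ k c).trans <|
    prod_congr rfl fun c _ => integral_centeredBit_pow (hP _ _) _

lemma integral_centeredEntry_pow (hP : ∀ i j, P i j ∈ Set.Icc 0 1) (c : ι × κ) (k : ℕ) :
    ∫ ω, centeredEntry P c ω ^ k ∂bernArray P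
      = P c.1 c.2 * (P c.1 c.2 - 1) ^ k + (1 - P c.1 c.2) * P c.1 c.2 ^ k := by
  simpa using integral_finset_prod_centeredEntry_pow hP {c} fun _ => k

lemma integral_centeredEntry_pow_four_le (hP : ∀ i j, P i j ∈ Set.Icc 0 1) (c : ι × κ) :
    ∫ ω, centeredEntry P c ω ^ 4 ∂bernArray P ≤ P c.1 c.2 := by
  obtain ⟨h0, h1⟩ := hP c.1 c.2
  rw [integral_centeredEntry_pow hP]
  nlinarith [mul_nonneg (mul_nonneg h0 (sub_nonneg.2 h1)) (sq_nonneg (P c.1 c.2 - 1)),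
    mul_nonneg (mul_nonneg h0 (sub_nonneg.2 h1)) (sq_nonneg (P c.1 c.2))]

lemma integral_centeredEntry_sq_mul_sq [DecidableEq ι] [DecidableEq κ]
    (hP : ∀ i j, P i j ∈ Set.Icc 0 1) {c d : ι × κ} (hcd : c ≠ d) :
    ∫ ω, centeredEntry P c ω ^ 2 * centeredEntry P d ω ^ 2 ∂bernArray P
      = P c.1 c.2 * (1 - P c.1 c.2) * (P d.1 d.2 * (1 - P d.1 d.2)) := by
  have := integral_finset_prod_centeredEntry_pow hP {c, d} fun _ => 2
  simp only [prod_pair hcd] at this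
  rw [this]
  ring

lemma integral_prod_centeredEntry_eq_zero (hP : ∀ i j, P i j ∈ Set.Icc 0 1) {τ : Type*}
    [Fintype τ] (c : τ → ι × κ) {t : τ} (ht : ∀ s, c s = c t → s = t) :
    ∫ ω, ∏ s, centeredEntry P (c s) ω ∂bernArray P = 0 := by
  classical
  have hfiber : #{s | c s = c t} = 1 :=
    card_eq_one.2 ⟨t, by ext s; simpa using ⟨ht s, fun h => h ▸ rfl⟩⟩
  have hgroup : ∀ ω, ∏ s, centeredEntry P (c s) ω
      = ∏ e ∈ univ.image c, centeredEntry P e ω ^ #{s | c s = e} :=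
    fun ω => prod_comp (fun e => centeredEntry P e ω) c
  simp_rw [hgroup, integral_finset_prod_centeredEntry_pow hP]
  refine prod_eq_zero (mem_image_of_mem c (mem_univ t)) ?_
  rw [hfiber]
  ring

lemma integral_centeredEntry_mul [DecidableEq ι] [DecidableEq κ]
    (hP : ∀ i j, P i j ∈ Set.Icc 0 1) (c d : ι × κ) :
    ∫ ω, centeredEntry P c ω * centeredEntry P d ω ∂bernArray P
      = if c = d then P c.1 c.2 * (1 - P c.1 c.2) else 0 := by
  split_ifs with hcd
  · subst hcd
    simp only [← sq, integral_centeredEntry_pow hP]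
    ring
  · simpa [Fin.prod_univ_two] using integral_prod_centeredEntry_eq_zero hP ![c, d] (t := 0)
      (by simp [Fin.forall_fin_two, Ne.symm hcd])

lemma integral_centeredEntry_mul_four_eq_zero (hP : ∀ i j, P i j ∈ Set.Icc 0 1)
    {c₁ c₂ c₃ c₄ : ι × κ}
    (h : ¬((c₁ = c₂ ∧ c₃ = c₄) ∨ (c₁ = c₃ ∧ c₂ = c₄) ∨ (c₁ = c₄ ∧ c₂ = c₃))) :
    ∫ ω, centeredEntry P c₁ ω * centeredEntry P c₂ ω
      * (centeredEntry P c₃ ω * centeredEntry P c₄ ω) ∂bernArray P = 0 := by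
  obtain ⟨t, ht⟩ : ∃ t : Fin 4, ∀ s, ![c₁, c₂, c₃, c₄] s = ![c₁, c₂, c₃, c₄] t → s = t := by
    by_contra! H
    simp [Fin.exists_fin_succ, Fin.forall_fin_succ] at H
    grind
  simpa [Fin.prod_univ_four, mul_assoc] using integral_prod_centeredEntry_eq_zero hP _ ht

end BernoulliArray

section FourthMoments

def kroneckerDelta {α : Type*} [DecidableEq α] (x y : α) : ℝ := if x = y then 1 else 0

def fourthMomentBound {α : Type*} (q : ℝ) (δ : α → α → ℝ) (c₁ c₂ c₃ c₄ : α) : ℝ :=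
  q ^ 2 * (δ c₁ c₃ * δ c₂ c₄ + δ c₁ c₄ * δ c₂ c₃) + q * (δ c₁ c₂ * δ c₁ c₃ * δ c₁ c₄)

lemma fourthMomentBound_mono {α : Type*} {q : ℝ} (hq : 0 ≤ q) {δ δ' : α → α → ℝ}
    (hδ : ∀ x y, 0 ≤ δ x y) (hδδ' : ∀ x y, δ x y ≤ δ' x y) (c₁ c₂ c₃ c₄ : α) :
    fourthMomentBound q δ c₁ c₂ c₃ c₄ ≤ fourthMomentBound q δ' c₁ c₂ c₃ c₄ := by
  have hδ' : ∀ x y, 0 ≤ δ' x y := fun x y => (hδ x y).trans (hδδ' x y)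
  unfold fourthMomentBound
  gcongr <;> apply_rules [hδδ', hδ, hδ', mul_nonneg, add_nonneg]

variable {ι κ : Type*} [Fintype ι] [Fintype κ] [DecidableEq ι] [DecidableEq κ]
  {P : ι → κ → ℝ}

lemma covariance_centeredEntry_mul_le {q : ℝ} (hP : ∀ i j, P i j ∈ Set.Icc 0 q) (hq : q ≤ 1)
    (c₁ c₂ c₃ c₄ : ι × κ) :
    cov[fun ω => centeredEntry P c₁ ω * centeredEntry P c₂ ω,
        fun ω => centeredEntry P c₃ ω * centeredEntry P c₄ ω; bernArray P]
      ≤ fourthMomentBound q kroneckerDelta c₁ c₂ c₃ c₄ := by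
  have hP1 : ∀ i j, P i j ∈ Set.Icc 0 1 := fun i j => ⟨(hP i j).1, (hP i j).2.trans hq⟩
  have := isProbabilityMeasure_bernArray hP1
  have hq0 : 0 ≤ q := (hP c₁.1 c₁.2).1.trans (hP c₁.1 c₁.2).2
  have hvar (c : ι × κ) : 0 ≤ P c.1 c.2 * (1 - P c.1 c.2) ∧ P c.1 c.2 * (1 - P c.1 c.2) ≤ q := by
    obtain ⟨h0, h1⟩ := hP c.1 c.2
    constructor <;> nlinarith
  have hbound_nonneg : 0 ≤ fourthMomentBound q kroneckerDelta c₁ c₂ c₃ c₄ := by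
    unfold fourthMomentBound kroneckerDelta
    positivity
  rw [covariance_eq_sub MemLp.of_discrete MemLp.of_discrete]
  simp only [Pi.mul_apply, integral_centeredEntry_mul hP1]
  by_cases hall : c₁ = c₂ ∧ c₁ = c₃ ∧ c₁ = c₄
  · obtain ⟨rfl, rfl, rfl⟩ := hall
    have hpow : ∀ ω, centeredEntry P c₁ ω * centeredEntry P c₁ ω
        * (centeredEntry P c₁ ω * centeredEntry P c₁ ω) = centeredEntry P c₁ ω ^ 4 :=
      fun ω => by ring
    have hfour := integral_centeredEntry_pow_four_le hP1 c₁
    simp only [hpow, fourthMomentBound, kroneckerDelta, if_true]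
    nlinarith [(hP c₁.1 c₁.2).2, (hvar c₁).1]
  by_cases hpaired : (c₁ = c₂ ∧ c₃ = c₄) ∨ (c₁ = c₃ ∧ c₂ = c₄) ∨ (c₁ = c₄ ∧ c₂ = c₃)
  · rcases hpaired with ⟨rfl, rfl⟩ | ⟨rfl, rfl⟩ | ⟨rfl, rfl⟩
    · have h13 : c₁ ≠ c₃ := fun h => hall ⟨rfl, h, h⟩
      simp only [← sq, integral_centeredEntry_sq_mul_sq hP1 h13, if_true, sub_self,
        hbound_nonneg]
    all_goals
      have h12 : c₁ ≠ c₂ := by rintro rfl; exact hall ⟨rfl, rfl, rfl⟩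
      have hv := mul_le_mul (hvar c₁).2 (hvar c₂).2 (hvar c₂).1 hq0
      have hsq : ∀ ω, centeredEntry P c₁ ω * centeredEntry P c₂ ω
          * (centeredEntry P c₁ ω * centeredEntry P c₂ ω)
          = centeredEntry P c₁ ω ^ 2 * centeredEntry P c₂ ω ^ 2 := fun ω => by ring
      simp [mul_comm (centeredEntry P c₂ _), hsq, integral_centeredEntry_sq_mul_sq hP1 h12,
        fourthMomentBound, kroneckerDelta, h12, Ne.symm h12]
      nlinarith
  · rw [integral_centeredEntry_mul_four_eq_zero hP1 hpaired]
    by_cases h12 : c₁ = c₂ <;> simp_all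

end FourthMoments

section RandomGraph

variable {V : Type*} [LinearOrder V]

def edgeCoord (i j : V) : V × V := if i ≤ j then (i, j) else (j, i)

def unorderedDelta (x y : V × V) : ℝ :=
  kroneckerDelta x.1 y.1 * kroneckerDelta x.2 y.2 + kroneckerDelta x.1 y.2 * kroneckerDelta x.2 y.1

lemma eq_and_eq_or_eq_and_eq_of_edgeCoord_eq {i j k l : V} (h : edgeCoord i j = edgeCoord k l) :
    (i = k ∧ j = l) ∨ (i = l ∧ j = k) := by
  unfold edgeCoord at h
  split_ifs at h <;> simp only [Prod.mk.injEq] at h <;> tauto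

lemma kroneckerDelta_edgeCoord_le_unorderedDelta (x y : V × V) :
    kroneckerDelta (edgeCoord x.1 x.2) (edgeCoord y.1 y.2) ≤ unorderedDelta x y := by
  by_cases h : edgeCoord x.1 x.2 = edgeCoord y.1 y.2
  · rcases eq_and_eq_or_eq_and_eq_of_edgeCoord_eq h with ⟨h1, h2⟩ | ⟨h1, h2⟩ <;>
      simp only [unorderedDelta, kroneckerDelta, h1, h2, if_true, mul_one] <;>
      split_ifs <;> norm_num
  · simp only [unorderedDelta, kroneckerDelta, if_neg h]
    positivity

variable [Fintype V]

def degreeVarianceBound (m q : ℝ) : ℝ := q ^ 2 * (2 * (m ^ 3 + 3 * m ^ 2)) + q * (2 * m ^ 2 + 6 * m)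

lemma sum_fourthMomentBound_unorderedDelta (q : ℝ) :
    ∑ t : V × V × V, ∑ t' : V × V × V, fourthMomentBound q unorderedDelta
        (t.1, t.2.1) (t.1, t.2.2) (t'.1, t'.2.1) (t'.1, t'.2.2)
      = degreeVarianceBound (Fintype.card V) q := by
  -- Splitting the sums first keeps `Prod` projections out of the decidability instances of the
  -- `if`s, where they would stop `simp` from recognising constant summands.
  simp only [Fintype.sum_prod_type]
  simp [degreeVarianceBound, fourthMomentBound, unorderedDelta, kroneckerDelta, mul_add,
    sum_add_distrib, mul_ite, sum_ite_eq, sum_ite_eq']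
  ring

theorem variance_sum_sq_sum_centeredEntry_le {P : V → V → ℝ} {q : ℝ}
    (hP : ∀ i j, P i j ∈ Set.Icc 0 q) (hq : q ∈ Set.Icc 0 1) :
    Var[fun ω => ∑ i, (∑ j, centeredEntry P (edgeCoord i j) ω) ^ 2; bernArray P]
      ≤ degreeVarianceBound (Fintype.card V) q := by
  have := isProbabilityMeasure_bernArray fun i j => ⟨(hP i j).1, (hP i j).2.trans hq.2⟩
  have hexpand : (fun ω => ∑ i, (∑ j, centeredEntry P (edgeCoord i j) ω) ^ 2)
      = fun ω => ∑ t : V × V × V, centeredEntry P (edgeCoord t.1 t.2.1) ω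
          * centeredEntry P (edgeCoord t.1 t.2.2) ω := by
    ext ω
    simp [sq, sum_mul_sum, Fintype.sum_prod_type]
  rw [hexpand, variance_fun_sum fun _ => MemLp.of_discrete,
    ← sum_fourthMomentBound_unorderedDelta]
  refine sum_le_sum fun t _ => sum_le_sum fun t' _ => ?_
  exact (covariance_centeredEntry_mul_le hP hq.2 _ _ _ _).trans <|
    fourthMomentBound_mono (δ := fun x y : V × V =>
        kroneckerDelta (edgeCoord x.1 x.2) (edgeCoord y.1 y.2)) hq.1
      (fun _ _ => by unfold kroneckerDelta; positivity)
      kroneckerDelta_edgeCoord_le_unorderedDelta (t.1, t.2.1) (t.1, t.2.2) (t'.1, t'.2.1)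
      (t'.1, t'.2.2)

end RandomGraph

section StochasticBlockModel

lemma sum_sub_deg_eq_sum_centeredEntry {m : ℕ} {P : Fin m → Fin m → ℝ}
    (hP : ∀ i j, P i j = P j i) (ω : Fin m → Fin m → Bool) (i : Fin m) :
    ∑ j, P i j - deg ω i = ∑ j, centeredEntry P (edgeCoord i j) ω := by
  rw [deg, ← sum_sub_distrib]
  refine sum_congr rfl fun j _ => ?_
  by_cases hij : i ≤ j <;> simp [centeredEntry, centeredBit, edgeCoord, adjOf, hij, hP j i]

theorem variance_sum_sq_sum_sub_deg_le {m : ℕ} {P : Fin m → Fin m → ℝ} {q : ℝ}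
    (hPsymm : ∀ i j, P i j = P j i) (hP : ∀ i j, P i j ∈ Set.Icc 0 q) (hq : q ∈ Set.Icc 0 1) :
    Var[fun ω => ∑ i, (∑ j, P i j - deg ω i) ^ 2; bernArray P]
      ≤ degreeVarianceBound m q := by
  simpa [sum_sub_deg_eq_sum_centeredEntry hPsymm] using
    variance_sum_sq_sum_centeredEntry_le hP hq

lemma sbm_eq_bernArray_Bmat (n : ℕ) (a b : ℝ) : sbm n (a / n) (b / n) = bernArray (Bmat n a b) :=
  rfl

lemma Bmat_comm (n : ℕ) (a b : ℝ) (i j : Fin (2 * n)) : Bmat n a b i j = Bmat n a b j i := by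
  simp only [Bmat, Matrix.of_apply, iff_comm]

lemma sum_Bmat_row (n : ℕ) (a b : ℝ) (i : Fin (2 * n)) : ∑ j, Bmat n a b i j = a + b := by
  have hn : (n : ℝ) ≠ 0 := Nat.cast_ne_zero.2 (by have := i.isLt; omega)
  have hlow : #{j : Fin (2 * n) | (j : ℕ) < n} = n := by
    rw [Fin.card_filter_val_lt]; omega
  have hhigh : #{j : Fin (2 * n) | n ≤ (j : ℕ)} = n := by
    have := card_filter_add_card_filter_not (s := univ) fun j : Fin (2 * n) => (j : ℕ) < n
    simp only [not_lt, Fin.card_filter_val_lt, card_univ, Fintype.card_fin] at this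
    omega
  by_cases hi : (i : ℕ) < n <;>
    simp [Bmat, hi, sum_ite, hlow, hhigh] <;> field_simp

lemma degreeVarianceBound_two_mul_le {d n : ℝ} (hd : 2 ≤ d) (hdn : d ≤ n) :
    degreeVarianceBound (2 * n) (d / n) ≤ 84 * d ^ 2 * n := by
  have hn : 0 < n := by linarith
  have hexpand : degreeVarianceBound (2 * n) (d / n)
      = 16 * d ^ 2 * n + 24 * d ^ 2 + 8 * d * n + 12 * d := by
    unfold degreeVarianceBound
    field_simp
    ring
  have h1 : 0 ≤ d ^ 2 * (n - 2) := mul_nonneg (sq_nonneg d) (by linarith)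
  have h2 : 0 ≤ d * n * (d - 2) := mul_nonneg (by positivity) (by linarith)
  have h3 : 0 ≤ d * (d * n - 4) := mul_nonneg (by linarith) (by nlinarith)
  rw [hexpand]
  nlinarith

end StochasticBlockModel

theorem stmt10_general (n : ℕ) (a b : ℝ) (ha : 1 ≤ a) (hb : 1 ≤ b)
    (hdn : a + b ≤ n) :
    variance (fun ω => ∑ i, ((a + b) - deg ω i) ^ 2) (sbm n (a / n) (b / n))
      ≤ 84 * (a + b) ^ 2 * n := by
  have hn : (0 : ℝ) < n := by linarith
  have hP : ∀ i j, Bmat n a b i j ∈ Set.Icc 0 ((a + b) / n) := fun i j => by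
    simp only [Bmat, Matrix.of_apply]
    split_ifs <;> exact ⟨by positivity, by gcongr; linarith⟩
  have hq : (a + b) / n ∈ Set.Icc 0 1 := ⟨by positivity, (div_le_one hn).2 hdn⟩
  have hvar := variance_sum_sq_sum_sub_deg_le (Bmat_comm n a b) hP hq
  simp only [sum_Bmat_row, Nat.cast_mul, Nat.cast_ofNat] at hvar
  rw [sbm_eq_bernArray_Bmat]
  exact hvar.trans (degreeVarianceBound_two_mul_le (by linarith) hdn)

/-- If `a, b ≥ 1` and `d := a + b ≤ n`, then for `G ∼ G_{2n,a/n,b/n}`,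
the variance of `∑_{i} (d - d_i)²` is at most `84·d²·n`. -/
theorem stmt10 (n : ℕ) (hn : 0 < n) (a b : ℝ) (ha : 1 ≤ a) (hb : 1 ≤ b)
    (hdn : a + b ≤ n) :
    variance (fun ω => ∑ i, ((a + b) - deg ω i) ^ 2) (sbm n (a / n) (b / n))
      ≤ 84 * (a + b) ^ 2 * n :=
  stmt10_general n a b ha hb hdn
end

section
/- Let d > 0 and let X be a nonnegative real random variable with E[X] = d and Var(X) ≤ d. Then E[sqrt(X)] ≥ sqrt(d) − 1/(2·sqrt(d)). -/
/-!
The square root lies above the parabola that touches it at `d` to second order,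
`√x ≥ √d + (x - d) / (2√d) - (x - d)² / (2d√d)` for `x ≥ 0`. Taking expectations at `d = 𝔼[X]`
kills the linear term and turns the quadratic one into `Var(X) / (2d√d) ≤ 1 / (2√d)`.
-/

open MeasureTheory ProbabilityTheory

namespace Real

lemma sqrt_add_div_sub_sq_div_le_sqrt {d x : ℝ} (hd : 0 < d) (hx : 0 ≤ x) :
    √d + (x - d) / (2 * √d) - (x - d) ^ 2 / (2 * d * √d) ≤ √x := by
  have ht : 0 < √d := sqrt_pos.2 hd
  have hs : 0 ≤ √x := sqrt_nonneg x
  have hx' : √x ^ 2 = x := sq_sqrt hx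
  have hd' : √d ^ 2 = d := sq_sqrt hd.le
  generalize √x = s at *
  generalize √d = t at *
  subst hx' hd'
  rw [← sub_nonneg]
  have hfactor : s - (t + (s ^ 2 - t ^ 2) / (2 * t) - (s ^ 2 - t ^ 2) ^ 2 / (2 * t ^ 2 * t)) =
      s * (s - t) ^ 2 * (s + 2 * t) / (2 * t ^ 2 * t) := by
    field_simp
    ring
  rw [hfactor]
  positivity

lemma sqrt_le_one_add {x : ℝ} (hx : 0 ≤ x) : √x ≤ 1 + x :=
  (sqrt_le_left (by linarith)).2 (by nlinarith)

end Real

namespace ProbabilityTheory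

variable {Ω : Type*} [MeasurableSpace Ω] {μ : Measure Ω} {X : Ω → ℝ}

lemma integrable_sqrt_of_nonneg [IsFiniteMeasure μ] (hXi : Integrable X μ) (hXnn : 0 ≤ᵐ[μ] X) :
    Integrable (fun ω ↦ √(X ω)) μ := by
  refine ((integrable_const 1).add hXi).mono'
    (Real.continuous_sqrt.comp_aestronglyMeasurable hXi.aestronglyMeasurable) ?_
  filter_upwards [hXnn] with ω hω
  rw [Real.norm_of_nonneg (Real.sqrt_nonneg _)]
  exact Real.sqrt_le_one_add hω

lemma sqrt_integral_sub_variance_div_le_integral_sqrt [IsProbabilityMeasure μ]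
    (hX : MemLp X 2 μ) (hXnn : 0 ≤ᵐ[μ] X) (hm : 0 < μ[X]) :
    √(μ[X]) - variance X μ / (2 * μ[X] * √(μ[X])) ≤ ∫ ω, √(X ω) ∂μ := by
  set m := μ[X]
  have hXi : Integrable X μ := hX.integrable one_le_two
  have hlin : Integrable (fun ω ↦ X ω - m) μ := hXi.sub (integrable_const m)
  have hsq : Integrable (fun ω ↦ (X ω - m) ^ 2) μ := (hX.sub (memLp_const m)).integrable_sq
  have hmean : ∫ ω, (X ω - m) ∂μ = 0 := by
    rw [integral_sub hXi (integrable_const m), integral_const]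
    simp [m]
  have hconst_lin : Integrable (fun ω ↦ √m + (X ω - m) / (2 * √m)) μ :=
    (integrable_const _).add (hlin.div_const _)
  have hparabola : ∫ ω, (√m + (X ω - m) / (2 * √m) - (X ω - m) ^ 2 / (2 * m * √m)) ∂μ =
      √m - variance X μ / (2 * m * √m) := by
    rw [integral_sub hconst_lin (hsq.div_const _), integral_add (integrable_const _) (hlin.div_const _), integral_const, integral_div,
      integral_div, hmean, variance_eq_integral hX.aestronglyMeasurable.aemeasurable]
    simp [m]
  rw [← hparabola]
  refine integral_mono_ae (hconst_lin.sub (hsq.div_const _)) (integrable_sqrt_of_nonneg hXi hXnn) ?_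
  filter_upwards [hXnn] with ω hω
  exact Real.sqrt_add_div_sub_sq_div_le_sqrt hm hω

end ProbabilityTheory

/-- If `X` is a nonnegative real random variable with `𝔼[X] = d > 0` and
`Var(X) ≤ d`, then `𝔼[√X] ≥ √d - 1/(2·√d)`. -/
theorem stmt12 {Ω : Type*} [MeasurableSpace Ω] (μ : Measure Ω) [IsProbabilityMeasure μ]
    (d : ℝ) (hd : 0 < d)
    (X : Ω → ℝ) (hXnn : ∀ ω, 0 ≤ X ω) (hX2 : MemLp X 2 μ)
    (hmean : ∫ ω, X ω ∂μ = d) (hvar : variance X μ ≤ d) :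
    Real.sqrt d - 1 / (2 * Real.sqrt d) ≤ ∫ ω, Real.sqrt (X ω) ∂μ := by
  have hsd : 0 < √d := Real.sqrt_pos.2 hd
  have hvar_term : variance X μ / (2 * d * √d) ≤ 1 / (2 * √d) := by
    rw [div_le_div_iff₀ (by positivity) (by positivity)]
    nlinarith
  have hbound := sqrt_integral_sub_variance_div_le_integral_sqrt hX2
    (Filter.Eventually.of_forall hXnn) (hmean ▸ hd)
  rw [hmean] at hbound
  linarith
end

section
/- Let n be a positive integer and d > 0. Let D be a 2n×2n diagonal matrix with nonnegative diagonal entries d_1,…,d_{2n} satisfying ∑_{j=1}^{2n} (sqrt(d) − sqrt(d_j))² ≤ 2n. Let w ∈ ℝ^{2n} be a unit vector orthogonal to D^{1/2}𝟙. Then |⟨w, 𝟙⟩| / sqrt(2n) ≤ 1/sqrt(d). -/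
/-- Let `D` be a `2n×2n` diagonal matrix with nonnegative entries `d_j`
satisfying `∑_j (√d - √(d_j))² ≤ 2n`, and let `w` be a unit vector orthogonal to
`D^{1/2}𝟙`.  Then `|⟨w, 𝟙⟩| / √(2n) ≤ 1/√d`. -/
theorem stmt14 (n : ℕ) (hn : 0 < n) (d : ℝ) (hd : 0 < d)
    (dv : Fin (2*n) → ℝ) (hdv : ∀ j, 0 ≤ dv j)
    (hsum : ∑ j, (Real.sqrt d - Real.sqrt (dv j)) ^ 2 ≤ 2 * n)
    (w : Fin (2*n) → ℝ) (hw : ∑ i, w i ^ 2 = 1)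
    (horth : ∑ i, w i * Real.sqrt (dv i) = 0) :
    |∑ i, w i * 1| / Real.sqrt (2 * n) ≤ 1 / Real.sqrt d := by
  have hn2 : (0:ℝ) < 2 * n := by positivity
  have hsd : (0:ℝ) < Real.sqrt d := Real.sqrt_pos.2 hd
  have hsn : (0:ℝ) < Real.sqrt (2 * n) := Real.sqrt_pos.2 hn2
  have key : (Real.sqrt d * ∑ i, w i) ^ 2 ≤ 2 * n := by
    have h1 : Real.sqrt d * ∑ i, w i
        = ∑ i, w i * (Real.sqrt d - Real.sqrt (dv i)) := by
      simp only [mul_sub, Finset.sum_sub_distrib, horth, sub_zero, Finset.mul_sum]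
      congr 1; ext i; ring
    rw [h1]
    calc (∑ i, w i * (Real.sqrt d - Real.sqrt (dv i))) ^ 2
        ≤ (∑ i, w i ^ 2) * ∑ i, (Real.sqrt d - Real.sqrt (dv i)) ^ 2 :=
          Finset.sum_mul_sq_le_sq_mul_sq _ _ _
      _ ≤ 2 * n := by rw [hw, one_mul]; exact hsum
  have h2 : |∑ i, w i| ≤ Real.sqrt (2 * n) / Real.sqrt d := by
    rw [le_div_iff₀ hsd]
    have := abs_le_of_sq_le_sq' (by
      calc (|∑ i, w i| * Real.sqrt d) ^ 2 = (Real.sqrt d * ∑ i, w i) ^ 2 := by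
            rw [mul_comm, mul_pow, sq_abs, mul_pow]
        _ ≤ 2 * (n:ℝ) := key
        _ = Real.sqrt (2 * n) ^ 2 := (Real.sq_sqrt hn2.le).symm) hsn.le
    exact this.2
  simp only [mul_one]
  rw [div_le_div_iff₀ hsn hsd] at *
  calc |∑ i, w i| * Real.sqrt d ≤ Real.sqrt (2 * n) / Real.sqrt d * Real.sqrt d := by
        exact mul_le_mul_of_nonneg_right h2 hsd.le
    _ = Real.sqrt (2 * n) := by field_simp
    _ = 1 * Real.sqrt (2 * n) := (one_mul _).symm
end
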